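/- With τ_1,…,τ_N the ordering of the positive roots determined by a reduced decomposition of the longest Weyl group element as in the context, and δ = (1/2)·Σ_{k=1}^N τ_k, one has for every j = 2,…,N: ⟨δ, τ_j^∨⟩ − 1 = Σ_{k=1}^{j−1} ⟨τ_k, τ_j^∨⟩; equivalently, Σ_{k=j+1}^{N} ⟨τ_k, τ_j^∨⟩ = Σ_{k=1}^{j−1} ⟨τ_k, τ_j^∨⟩. -/

import Mathlib

/-!
Write `w = r_{γ_1} ⋯ r_{γ_{j-1}}`, so that `τ_j = w γ_j`. A simple reflection `r_γ` permutes the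
positive roots other than `γ`, hence `⟨2δ, γ^∨⟩ = 2` for every simple root, and by induction
`w (2δ) = 2δ - 2 (τ_1 + ⋯ + τ_{j-1})`. The pairing is invariant under reflections, because a
reflection preserving the finite set `Φ` is determined by its root; therefore
`⟨2δ, τ_j^∨⟩ - 2 ∑_{k<j} ⟨τ_k, τ_j^∨⟩ = ⟨w (2δ), (w γ_j)^∨⟩ = ⟨2δ, γ_j^∨⟩ = 2`. This is the first
identity, and the second follows by writing `2δ = ∑_k τ_k` and using `⟨τ_j, τ_j^∨⟩ = 2`.
-/

noncomputable section

/-- `reflComp pair g j = r_{g 1} ∘ r_{g 2} ∘ ⋯ ∘ r_{g j}` (rightmost reflection applied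
first), where `r_γ β = β − ⟨β, γ^∨⟩ • γ` and `pair β γ = ⟨β, γ^∨⟩`. -/
def reflComp {V : Type*} [AddCommGroup V] [Module ℝ V]
    (pair : V → V → ℝ) (g : ℕ → V) : ℕ → V → V
  | 0 => id
  | j + 1 => fun β => reflComp pair g j (β - pair β (g (j + 1)) • g (j + 1))

open Module Set

lemma Finset.sum_Icc_eq_sum_add_add_sum {M : Type*} [AddCommMonoid M] (f : ℕ → M) {j N : ℕ}
    (hj : 1 ≤ j) (hjN : j ≤ N) :
    ∑ k ∈ Finset.Icc 1 N, f k
      = ∑ k ∈ Finset.Icc 1 (j - 1), f k + f j + ∑ k ∈ Finset.Icc (j + 1) N, f k := by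
  obtain ⟨i, rfl⟩ : ∃ i, j = i + 1 := ⟨j - 1, by omega⟩
  simp only [Nat.add_sub_cancel, ← Finset.Ico_add_one_right_eq_Icc]
  rw [← Finset.sum_Ico_consecutive f (by omega : 1 ≤ i + 1 + 1) (by omega : i + 1 + 1 ≤ N + 1),
    Finset.sum_Ico_succ_top (by omega : 1 ≤ i + 1)]

lemma Finset.sum_eq_sum_Icc_of_existsUnique {M : Type*} [AddCommMonoid M] {s : Finset M}
    {N : ℕ} {τ : ℕ → M} (hτ : ∀ k, 1 ≤ k → k ≤ N → τ k ∈ s)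
    (huniq : ∀ β ∈ s, ∃! k, 1 ≤ k ∧ k ≤ N ∧ τ k = β) :
    ∑ β ∈ s, β = ∑ k ∈ Finset.Icc 1 N, τ k := by
  refine (Finset.sum_bij (fun k _ => τ k) (fun k hk => ?_) (fun a ha b hb hab => ?_)
    (fun β hβ => ?_) fun _ _ => rfl).symm
  · obtain ⟨h1, h2⟩ := Finset.mem_Icc.mp hk
    exact hτ k h1 h2
  · obtain ⟨ha1, ha2⟩ := Finset.mem_Icc.mp ha
    obtain ⟨hb1, hb2⟩ := Finset.mem_Icc.mp hb
    exact (huniq _ (hτ a ha1 ha2)).unique ⟨ha1, ha2, rfl⟩ ⟨hb1, hb2, hab.symm⟩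
  · obtain ⟨k, ⟨h1, h2, hk⟩, -⟩ := huniq β hβ
    exact ⟨k, Finset.mem_Icc.mpr ⟨h1, h2⟩, hk⟩

section RootPairing

variable {V : Type*} [AddCommGroup V] [Module ℝ V] {pair : V → V → ℝ}

lemma pair_eq_of_preReflection_mapsTo {Φ : Set V} (hΦ : Φ.Finite) {γ : V}
    (hγ : IsLinearMap ℝ fun β => pair β γ) (hγγ : pair γ γ = 2)
    (hγΦ : ∀ β ∈ Φ, β - pair β γ • γ ∈ Φ) (hγspan : γ ∈ Submodule.span ℝ Φ)
    {f : Dual ℝ V} (hf : f γ = 2) (hfΦ : MapsTo (preReflection γ f) Φ Φ)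
    {β : V} (hβ : β ∈ Submodule.span ℝ Φ) : f β = pair β γ := by
  have h := Dual.eq_of_preReflection_mapsTo' hΦ hγspan hf hfΦ
    (g := IsLinearMap.mk' _ hγ) hγγ hγΦ
  simpa using LinearMap.congr_fun h ⟨β, hβ⟩

lemma pair_reflection_reflection {Φ : Finset V}
    (hlin : ∀ α ∈ Φ, IsLinearMap ℝ fun β => pair β α) (hpair2 : ∀ α ∈ Φ, pair α α = 2)
    (hrefl : ∀ α ∈ Φ, ∀ β ∈ Φ, β - pair β α • α ∈ Φ) {α γ β : V} (hα : α ∈ Φ) (hγ : γ ∈ Φ)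
    (hβ : β ∈ Submodule.span ℝ (Φ : Set V)) :
    pair (β - pair β α • α) (γ - pair γ α • α) = pair β γ := by
  set s := preReflection α (IsLinearMap.mk' _ (hlin α hα))
  have hss : ∀ x, s (s x) = x := involutive_preReflection (hpair2 α hα)
  have hsΦ : ∀ x ∈ Φ, s x ∈ Φ := hrefl α hα
  have hsγ : s γ ∈ Φ := hsΦ γ hγ
  have hsspan : ∀ x ∈ Submodule.span ℝ (Φ : Set V), s x ∈ Submodule.span ℝ (Φ : Set V) :=
    fun x hx => Submodule.sub_mem _ hx (Submodule.smul_mem _ _ (Submodule.subset_span hα))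
  -- `⟨s ·, γ^∨⟩` is a coroot for `s γ`, so it agrees with `⟨·, (s γ)^∨⟩` on the span of `Φ`.
  set f : Dual ℝ V := (IsLinearMap.mk' _ (hlin γ hγ)).comp s
  have hf : f (s γ) = 2 := by simpa [f, hss] using hpair2 γ hγ
  have hfΦ : MapsTo (preReflection (s γ) f) Φ Φ := by
    intro y hy
    have hy' : preReflection (s γ) f y = s (s y - pair (s y) γ • γ) := by
      simp only [f, preReflection_apply, LinearMap.comp_apply, IsLinearMap.mk'_apply, map_sub,
        map_smul, hss]
    rw [hy']
    exact hsΦ _ (hrefl γ hγ _ (hsΦ y hy))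
  have key := pair_eq_of_preReflection_mapsTo Φ.finite_toSet (hlin _ hsγ) (hpair2 _ hsγ)
    (hrefl _ hsγ) (Submodule.subset_span hsγ) hf hfΦ (hsspan β hβ)
  calc pair (β - pair β α • α) (γ - pair γ α • α) = f (s β) := key.symm
    _ = pair β γ := by simp [f, hss]

lemma sum_pair_eq_zero_of_mapsTo {γ : V} (hγ : IsLinearMap ℝ fun β => pair β γ)
    (hγγ : pair γ γ = 2) {s : Finset V} (hs : ∀ β ∈ s, β - pair β γ • γ ∈ s) :
    ∑ β ∈ s, pair β γ = 0 := by
  set r := preReflection γ (IsLinearMap.mk' _ hγ)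
  have hrr : ∀ β, r (r β) = β := involutive_preReflection hγγ
  have hneg : ∀ β, pair (r β) γ = -pair β γ := fun β => by
    change pair (β - pair β γ • γ) γ = _
    rw [hγ.map_sub, hγ.map_smul, hγγ, smul_eq_mul]
    ring
  have hperm : ∑ β ∈ s, pair β γ = ∑ β ∈ s, pair (r β) γ :=
    Finset.sum_nbij' r r hs hs (fun β _ => hrr β) (fun β _ => hrr β) (fun β _ => by rw [hrr])
  rw [Finset.sum_congr rfl fun β _ => hneg β, Finset.sum_neg_distrib] at hperm
  linarith

lemma pair_sum_eq_two {Pos : Finset V} {γ : V} (hγ : IsLinearMap ℝ fun β => pair β γ)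
    (hγγ : pair γ γ = 2) (hγPos : γ ∈ Pos) (hnegγ : -γ ∉ Pos)
    (hPos : ∀ β ∈ Pos, β ≠ γ → β - pair β γ • γ ∈ Pos) :
    pair (∑ β ∈ Pos, β) γ = 2 := by
  classical
  set r := preReflection γ (IsLinearMap.mk' _ hγ)
  have herase : ∀ β ∈ Pos.erase γ, r β ∈ Pos.erase γ := by
    intro β hβ
    obtain ⟨hβγ, hβPos⟩ := Finset.mem_erase.mp hβ
    refine Finset.mem_erase.mpr ⟨fun h => hnegγ ?_, hPos β hβPos hβγ⟩
    have hrr : r (r β) = β := involutive_preReflection (f := IsLinearMap.mk' _ hγ) hγγ β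
    have hrγ : r γ = -γ := preReflection_apply_self (f := IsLinearMap.mk' _ hγ) hγγ
    rwa [← hrγ, ← h, hrr]
  have hsum := map_sum (IsLinearMap.mk' _ hγ) id Pos
  simp only [IsLinearMap.mk'_apply, id] at hsum
  rw [hsum, ← Finset.add_sum_erase _ _ hγPos, hγγ, sum_pair_eq_zero_of_mapsTo hγ hγγ herase,
    add_zero]

end RootPairing

section ReflComp

variable {V : Type*} [AddCommGroup V] [Module ℝ V] {pair : V → V → ℝ} {g : ℕ → V}

lemma isLinearMap_reflComp (m : ℕ)
    (hg : ∀ k, 1 ≤ k → k ≤ m → IsLinearMap ℝ fun β => pair β (g k)) :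
    IsLinearMap ℝ (reflComp pair g m) := by
  induction m with
  | zero => exact LinearMap.id.isLinear
  | succ m ih =>
    exact ((IsLinearMap.mk' _ (ih fun k h1 h2 => hg k h1 (by omega))).comp
      (preReflection (g (m + 1)) (IsLinearMap.mk' _ (hg (m + 1) (by omega) le_rfl)))).isLinear

lemma reflComp_eq_sub_two_smul_sum (m : ℕ)
    (hg : ∀ k, 1 ≤ k → k ≤ m → IsLinearMap ℝ fun β => pair β (g k)) {S : V}
    (hS : ∀ k, 1 ≤ k → k ≤ m → pair S (g k) = 2) :
    reflComp pair g m S = S - (2 : ℝ) • ∑ k ∈ Finset.Icc 1 m, reflComp pair g (k - 1) (g k) := by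
  induction m with
  | zero => simp [reflComp]
  | succ m ih =>
    have hw := isLinearMap_reflComp m fun k h1 h2 => hg k h1 (by omega)
    change reflComp pair g m (S - pair S (g (m + 1)) • g (m + 1)) = _
    rw [hS _ (by omega) le_rfl, hw.map_sub, hw.map_smul,
      ih (fun k h1 h2 => hg k h1 (by omega)) (fun k h1 h2 => hS k h1 (by omega)),
      Finset.sum_Icc_succ_top (by omega), Nat.add_sub_cancel]
    module

lemma pair_reflComp_reflComp {Φ : Finset V}
    (hlin : ∀ α ∈ Φ, IsLinearMap ℝ fun β => pair β α) (hpair2 : ∀ α ∈ Φ, pair α α = 2)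
    (hrefl : ∀ α ∈ Φ, ∀ β ∈ Φ, β - pair β α • α ∈ Φ) (m : ℕ)
    (hg : ∀ k, 1 ≤ k → k ≤ m → g k ∈ Φ) {β γ : V} (hβ : β ∈ Submodule.span ℝ (Φ : Set V))
    (hγ : γ ∈ Φ) :
    pair (reflComp pair g m β) (reflComp pair g m γ) = pair β γ := by
  induction m generalizing β γ with
  | zero => rfl
  | succ m ih =>
    have hα : g (m + 1) ∈ Φ := hg _ (by omega) le_rfl
    calc pair (reflComp pair g (m + 1) β) (reflComp pair g (m + 1) γ)
        = pair (β - pair β (g (m + 1)) • g (m + 1)) (γ - pair γ (g (m + 1)) • g (m + 1)) :=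
          ih (fun k h1 h2 => hg k h1 (by omega))
            (Submodule.sub_mem _ hβ (Submodule.smul_mem _ _ (Submodule.subset_span hα)))
            (hrefl _ hα γ hγ)
      _ = pair β γ := pair_reflection_reflection hlin hpair2 hrefl hα hγ hβ

end ReflComp

theorem stmt8_general {V : Type*} [AddCommGroup V] [Module ℝ V]
    (Φ : Finset V) (pair : V → V → ℝ)
    -- `pair β α = ⟨β, α^∨⟩` is linear in `β` (the linear extension of the root/coroot
    -- pairing):
    (hlin : ∀ α ∈ Φ, IsLinearMap ℝ fun β => pair β α)
    (hpair2 : ∀ α ∈ Φ, pair α α = 2)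
    -- reflections preserve the root system:
    (hrefl : ∀ α ∈ Φ, ∀ β ∈ Φ, β - pair β α • α ∈ Φ)
    -- positive roots and the base:
    (Pos Δ : Finset V) (hPosSub : Pos ⊆ Φ) (hΔSub : Δ ⊆ Pos)
    (hsplit : ∀ α ∈ Φ, (α ∈ Pos ↔ -α ∉ Pos))
    (hbase : ∀ γ ∈ Δ, ∀ β ∈ Pos, β ≠ γ → β - pair β γ • γ ∈ Pos)
    -- `N` is the number of positive roots:
    (N : ℕ)
    -- the chosen simple roots `γ_1, …, γ_N`:
    (g : ℕ → V) (hg : ∀ j, 1 ≤ j → j ≤ N → g j ∈ Δ)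
    -- `τ_1, …, τ_N` are pairwise distinct and constitute exactly the set of positive roots:
    (htauPos : ∀ j, 1 ≤ j → j ≤ N → reflComp pair g (j - 1) (g j) ∈ Pos)
    (htau : ∀ β ∈ Pos, ∃! j, 1 ≤ j ∧ j ≤ N ∧ reflComp pair g (j - 1) (g j) = β)
    (j : ℕ) (hj2 : 2 ≤ j) (hjN : j ≤ N) :
    pair ((2⁻¹ : ℝ) • ∑ k ∈ Finset.Icc 1 N, reflComp pair g (k - 1) (g k))
        (reflComp pair g (j - 1) (g j)) - 1 =
      ∑ k ∈ Finset.Icc 1 (j - 1),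
        pair (reflComp pair g (k - 1) (g k)) (reflComp pair g (j - 1) (g j)) ∧
    ∑ k ∈ Finset.Icc (j + 1) N,
        pair (reflComp pair g (k - 1) (g k)) (reflComp pair g (j - 1) (g j)) =
      ∑ k ∈ Finset.Icc 1 (j - 1),
        pair (reflComp pair g (k - 1) (g k)) (reflComp pair g (j - 1) (g j)) := by
  set τ : ℕ → V := fun k => reflComp pair g (k - 1) (g k)
  set S : V := ∑ β ∈ Pos, β
  have hgΦ : ∀ k, 1 ≤ k → k ≤ N → g k ∈ Φ := fun k h1 h2 => hPosSub (hΔSub (hg k h1 h2))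
  have hτj : τ j ∈ Φ := hPosSub (htauPos j (by omega) hjN)
  have hτ := hlin _ hτj
  have hS : S = ∑ k ∈ Finset.Icc 1 N, τ k := Finset.sum_eq_sum_Icc_of_existsUnique htauPos htau
  have hSγ : ∀ k, 1 ≤ k → k ≤ N → pair S (g k) = 2 := fun k h1 h2 =>
    pair_sum_eq_two (hlin _ (hgΦ k h1 h2)) (hpair2 _ (hgΦ k h1 h2)) (hΔSub (hg k h1 h2))
      ((hsplit _ (hgΦ k h1 h2)).mp (hΔSub (hg k h1 h2))) (hbase _ (hg k h1 h2))
  have hpairSum : ∀ s : Finset ℕ, pair (∑ k ∈ s, τ k) (τ j) = ∑ k ∈ s, pair (τ k) (τ j) :=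
    fun s => by simpa only [IsLinearMap.mk'_apply] using map_sum (IsLinearMap.mk' _ hτ) τ s
  have key : pair S (τ j) - 2 * ∑ k ∈ Finset.Icc 1 (j - 1), pair (τ k) (τ j) = 2 := by
    have h := pair_reflComp_reflComp hlin hpair2 hrefl (j - 1)
      (fun k h1 h2 => hgΦ k h1 (by omega))
      (Submodule.sum_mem _ fun β hβ => Submodule.subset_span (hPosSub hβ)) (hgΦ j (by omega) hjN)
    rwa [reflComp_eq_sub_two_smul_sum (j - 1) (fun k h1 h2 => hlin _ (hgΦ k h1 (by omega)))
      (fun k h1 h2 => hSγ k h1 (by omega)), hSγ j (by omega) hjN, hτ.map_sub, hτ.map_smul,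
      hpairSum, smul_eq_mul] at h
  have hsplitSum := Finset.sum_Icc_eq_sum_add_add_sum (fun k => pair (τ k) (τ j)) (by omega) hjN
  rw [← hpairSum, ← hS, hpair2 _ hτj] at hsplitSum
  refine ⟨?_, by linarith⟩
  rw [← hS, hτ.map_smul, smul_eq_mul]
  linarith

/-- for a finite, reduced, crystallographic root pairing with base `Δ`,
positive roots `Pos`, and `τ_j = (r_{γ_1} ∘ ⋯ ∘ r_{γ_{j−1}})(γ_j)` enumerating the positive
roots (coming from a reduced decomposition of the longest Weyl group element), one has
`⟨δ, τ_j^∨⟩ − 1 = Σ_{k<j} ⟨τ_k, τ_j^∨⟩`, equivalently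
`Σ_{k>j} ⟨τ_k, τ_j^∨⟩ = Σ_{k<j} ⟨τ_k, τ_j^∨⟩`, where `δ` is half the sum of the positive
roots. -/
theorem stmt8 {V : Type*} [AddCommGroup V] [Module ℝ V]
    (Φ : Finset V) (pair : V → V → ℝ)
    -- `pair β α = ⟨β, α^∨⟩` is linear in `β` (the linear extension of the root/coroot
    -- pairing):
    (hlin : ∀ α ∈ Φ, IsLinearMap ℝ fun β => pair β α)
    (hpair2 : ∀ α ∈ Φ, pair α α = 2)
    -- crystallographic:
    (hcrys : ∀ α ∈ Φ, ∀ β ∈ Φ, ∃ m : ℤ, pair β α = (m : ℝ))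
    -- reduced:
    (hred : ∀ α ∈ Φ, ∀ t : ℝ, t • α ∈ Φ → t = 1 ∨ t = -1)
    (hroot_ne : ∀ α ∈ Φ, α ≠ 0)
    -- reflections preserve the root system:
    (hrefl : ∀ α ∈ Φ, ∀ β ∈ Φ, β - pair β α • α ∈ Φ)
    -- positive roots and the base:
    (Pos Δ : Finset V) (hPosSub : Pos ⊆ Φ) (hΔSub : Δ ⊆ Pos)
    (hsplit : ∀ α ∈ Φ, (α ∈ Pos ↔ -α ∉ Pos))
    (hbase : ∀ γ ∈ Δ, ∀ β ∈ Pos, β ≠ γ → β - pair β γ • γ ∈ Pos)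
    -- `N` is the number of positive roots:
    (N : ℕ) (hN : N = Pos.card)
    -- the chosen simple roots `γ_1, …, γ_N`:
    (g : ℕ → V) (hg : ∀ j, 1 ≤ j → j ≤ N → g j ∈ Δ)
    -- `τ_1, …, τ_N` are pairwise distinct and constitute exactly the set of positive roots:
    (htauPos : ∀ j, 1 ≤ j → j ≤ N → reflComp pair g (j - 1) (g j) ∈ Pos)
    (htau : ∀ β ∈ Pos, ∃! j, 1 ≤ j ∧ j ≤ N ∧ reflComp pair g (j - 1) (g j) = β)
    (j : ℕ) (hj2 : 2 ≤ j) (hjN : j ≤ N) :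
    pair ((2⁻¹ : ℝ) • ∑ k ∈ Finset.Icc 1 N, reflComp pair g (k - 1) (g k))
        (reflComp pair g (j - 1) (g j)) - 1 =
      ∑ k ∈ Finset.Icc 1 (j - 1),
        pair (reflComp pair g (k - 1) (g k)) (reflComp pair g (j - 1) (g j)) ∧
    ∑ k ∈ Finset.Icc (j + 1) N,
        pair (reflComp pair g (k - 1) (g k)) (reflComp pair g (j - 1) (g j)) =
      ∑ k ∈ Finset.Icc 1 (j - 1),
        pair (reflComp pair g (k - 1) (g k)) (reflComp pair g (j - 1) (g j)) :=
  stmt8_general Φ pair hlin hpair2 hrefl Pos Δ hPosSub hΔSub hsplit hbase N g hg htauPos htau j hj2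
    hjN
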